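/- Let m₁,…,m_r and n be positive integers with m = m₁+⋯+m_r. If the Kronecker product K_{m₁,…,m_r} × Kₙ admits an equitable k-coloring with k < ⌈mn/(m+1)⌉, then the complete multipartite graph K_{m₁n,…,m_rn} admits an equitable k-coloring. -/

import Mathlib

open SimpleGraph

/-- Kronecker (tensor) product of simple graphs. -/
def kronecker {α β : Type*} (G : SimpleGraph α) (H : SimpleGraph β) :
    SimpleGraph (α × β) where
  Adj p q := G.Adj p.1 q.1 ∧ H.Adj p.2 q.2
  symm := ⟨fun _ _ h => ⟨G.adj_symm h.1, H.adj_symm h.2⟩⟩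
  loopless := ⟨fun _ h => G.irrefl h.1⟩

/-- `G` admits an equitable `k`-coloring: a proper coloring with `k` colors
whose color classes differ in size by at most `1`. -/
def EquitablyColorable {V : Type*} [Fintype V] (G : SimpleGraph V) (k : ℕ) : Prop :=
  ∃ f : G.Coloring (Fin k), ∀ i j : Fin k,
    (Finset.univ.filter fun v => f v = i).card ≤
      (Finset.univ.filter fun v => f v = j).card + 1

/-!
The colouring of `K_{m₁,…,m_r} × Kₙ` is pulled back along the identification of the vertices
of `K_{m₁n,…,m_rn}` with `(Σ i, Fin mᵢ) × Fin n`. Since `k (m + 1) < m n`, every class of an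
equitable `k`-colouring has more than `m` vertices, so none lies inside a layer `· × {t}`.
Two vertices in different parts and different layers are adjacent in the product. If they lie
in the same layer `t`, a vertex `u` of their colour outside that layer is adjacent in the
product to one of them, because non-adjacency in a complete multipartite graph is transitive.
-/

open Finset

theorem EquitablyColorable.of_iso {V W : Type*} [Fintype V] [Fintype W] {G : SimpleGraph V}
    {G' : SimpleGraph W} {k : ℕ} (e : G ≃g G') (h : EquitablyColorable G k) :
    EquitablyColorable G' k := by
  obtain ⟨f, hf⟩ := h
  have hcard (c : Fin k) : #{w | f (e.symm w) = c} = #{v | f v = c} :=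
    Finset.card_equiv e.symm.toEquiv (by simp)
  exact ⟨f.comp e.symm.toHom, fun i j => by simpa [hcard] using hf i j⟩

theorem lt_card_fiber_of_mul_lt {V : Type*} [Fintype V] {k s : ℕ} (f : V → Fin k)
    (hf : ∀ i j, #{v | f v = i} ≤ #{v | f v = j} + 1) (hk : k * (s + 1) < Fintype.card V)
    (c : Fin k) : s < #{v | f v = c} := by
  by_contra! hc
  have : Fintype.card V ≤ k * (s + 1) := calc
    Fintype.card V = ∑ i, #{v | f v = i} :=
      card_eq_sum_card_fiberwise fun v _ => mem_univ (f v)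
    _ ≤ ∑ _i : Fin k, (s + 1) := sum_le_sum fun i _ => (hf i c).trans (by omega)
    _ = k * (s + 1) := by simp
  omega

theorem exists_mem_snd_ne_of_card_lt {α β : Type*} [Fintype α] {s : Finset (α × β)}
    (hs : Fintype.card α < #s) (t : β) : ∃ u ∈ s, u.2 ≠ t := by
  by_contra! h
  refine hs.not_ge (card_le_card_of_injOn Prod.fst (fun _ _ => mem_univ _) ?_)
  intro u hu v hv huv
  exact Prod.ext huv ((h u hu).trans (h v hv).symm)

namespace SimpleGraph

variable {α β C : Type*} {G : SimpleGraph α}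

theorem IsCompleteMultipartite.coloring_kronecker_top_ne_of_adj_fst
    (hG : G.IsCompleteMultipartite) (f : (kronecker G (⊤ : SimpleGraph β)).Coloring C)
    (hf : ∀ c t, ∃ u, f u = c ∧ u.2 ≠ t) {x y : α × β} (hxy : G.Adj x.1 y.1) :
    f x ≠ f y := by
  intro hfxy
  by_cases hxy2 : x.2 = y.2
  · obtain ⟨u, hu, hut⟩ := hf (f x) x.2
    by_cases hux : G.Adj u.1 x.1
    · exact f.valid (G := kronecker G ⊤) ⟨hux, hut⟩ hu
    · have huy : G.Adj u.1 y.1 := by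
        by_contra huy
        exact hG.trans _ _ _ (fun h => hux h.symm) huy hxy
      exact f.valid (G := kronecker G ⊤) ⟨huy, hxy2 ▸ hut⟩ (hu.trans hfxy)
  · exact f.valid (G := kronecker G ⊤) ⟨hxy, hxy2⟩ hfxy

theorem IsCompleteMultipartite.equitablyColorable_comap_fst [Fintype α] [Fintype β] {k : ℕ}
    (hG : G.IsCompleteMultipartite)
    (hk : k * (Fintype.card α + 1) < Fintype.card α * Fintype.card β)
    (h : EquitablyColorable (kronecker G (⊤ : SimpleGraph β)) k) :
    EquitablyColorable (G.comap (Prod.fst : α × β → α)) k := by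
  obtain ⟨f, hf⟩ := h
  have hbig := lt_card_fiber_of_mul_lt f hf (by rwa [Fintype.card_prod])
  have hescape c t : ∃ u, f u = c ∧ u.2 ≠ t := by
    simpa using exists_mem_snd_ne_of_card_lt (hbig c) t
  exact ⟨Coloring.mk f fun hxy => hG.coloring_kronecker_top_ne_of_adj_fst f hescape hxy,
    hf⟩

def completeMultipartiteGraph.isoComapFst {ι : Type*} {V W : ι → Type*}
    (e : ∀ i, V i ≃ W i × β) :
    completeMultipartiteGraph V ≃g
      (completeMultipartiteGraph W).comap (Prod.fst : (Σ i, W i) × β → _) where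
  toEquiv := (Equiv.sigmaCongrRight e).trans (Equiv.sigmaProdDistrib W β).symm
  map_rel_iff' := Iff.rfl

end SimpleGraph

theorem equitable_of_kronecker_equitable_general {r n k : ℕ} (m : Fin r → ℕ)
    (hk : k < ((∑ i, m i) * n + (∑ i, m i)) / ((∑ i, m i) + 1))
    (h : EquitablyColorable
      (kronecker (completeMultipartiteGraph fun i => Fin (m i))
        (⊤ : SimpleGraph (Fin n))) k) :
    EquitablyColorable (completeMultipartiteGraph fun i : Fin r => Fin (m i * n)) k := by
  have hcard : Fintype.card ((i : Fin r) × Fin (m i)) = ∑ i, m i := by simp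
  have hkm : k * (∑ i, m i + 1) < (∑ i, m i) * n := by
    have := (Nat.le_div_iff_mul_le (Nat.succ_pos _)).mp hk
    nlinarith
  refine EquitablyColorable.of_iso
    (completeMultipartiteGraph.isoComapFst fun i => finProdFinEquiv.symm).symm ?_
  refine IsCompleteMultipartite.equitablyColorable_comap_fst
    (completeMultipartiteGraph.isCompleteMultipartite _) ?_ h
  rwa [hcard, Fintype.card_fin]

/-- Lemma 3.1: if `K_{m₁,…,m_r} × Kₙ` is equitably `k`-colorable for some
`k < ⌈mn/(m+1)⌉` where `m = m₁ + ⋯ + m_r`, then `K_{m₁n,…,m_rn}` is equitably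
`k`-colorable. -/
theorem equitable_of_kronecker_equitable {r n k : ℕ} (m : Fin r → ℕ)
    (hm : ∀ i, 0 < m i) (hn : 0 < n)
    (hk : k < ((∑ i, m i) * n + (∑ i, m i)) / ((∑ i, m i) + 1))
    (h : EquitablyColorable
      (kronecker (completeMultipartiteGraph fun i => Fin (m i))
        (⊤ : SimpleGraph (Fin n))) k) :
    EquitablyColorable (completeMultipartiteGraph fun i : Fin r => Fin (m i * n)) k :=
  equitable_of_kronecker_equitable_general m hk h
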